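/- If k is a field of characteristic different from 3, then u = -(1/3)(E_1 + E_2) = e_0 - (1/3)(e_0 + e_1 + e_2) is an idempotent of the quandle algebra k[R_3] with ε(u) = 0. -/

import Mathlib

/-- Product on the quandle algebra k[R_3]: e_x · e_y = e_{2y-x}. -/
def qr {k : Type*} [Field k] (u v : ZMod 3 → k) : ZMod 3 → k :=
  fun z => ∑ x, ∑ y, if 2 * y - x = z then u x * v y else 0

/-- Basis element e_i. -/
def e (k : Type*) [Field k] (i : ZMod 3) : ZMod 3 → k :=
  fun z => if z = i then 1 else 0

/-- The element u = e_0 - (1/3)(e_0 + e_1 + e_2) = -(1/3)(E_1 + E_2). -/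
def u (k : Type*) [Field k] : ZMod 3 → k :=
  e k 0 - (3 : k)⁻¹ • (e k 0 + e k 1 + e k 2)

/-- If k is a field of characteristic ≠ 3, then u = -(1/3)(E_1 + E_2)
is an idempotent of k[R_3] with ε(u) = 0. -/
theorem stmt9 {k : Type*} [Field k] (hchar : ringChar k ≠ 3) :
    qr (u k) (u k) = u k ∧ ∑ z, u k z = 0 := by
  have h3 : (3 : k) ≠ 0 := fun h =>
    hchar (CharP.ringChar_of_prime_eq_zero (by norm_num) h)
  have hsum : ∀ f : ZMod 3 → k, ∑ x, f x = f 0 + f 1 + f 2 := by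
    intro f
    show ∑ x : Fin 3, f x = _
    exact Fin.sum_univ_three f
  have h01 : ((0 : ZMod 3) = 1) = False := by decide
  have h02 : ((0 : ZMod 3) = 2) = False := by decide
  have h10 : ((1 : ZMod 3) = 0) = False := by decide
  have h12 : ((1 : ZMod 3) = 2) = False := by decide
  have h20 : ((2 : ZMod 3) = 0) = False := by decide
  have h21 : ((2 : ZMod 3) = 1) = False := by decide
  have hmk : (⟨2, by norm_num⟩ : Fin 3) = (2 : ZMod 3) := rfl
  have hmk0 : (⟨0, by norm_num⟩ : Fin 3) = (0 : ZMod 3) := rfl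
  have hmk1 : (⟨1, by norm_num⟩ : Fin 3) = (1 : ZMod 3) := rfl
  constructor
  · funext z
    fin_cases z <;>
      · simp (config := { decide := true }) only [qr, u, e, hsum, Pi.sub_apply,
          Pi.add_apply, Pi.smul_apply, smul_eq_mul, if_true, if_false, hmk, hmk0, hmk1]
        norm_num [h01, h02, h10, h12, h20, h21]
        field_simp
        ring
  · simp only [u, e, hsum, Pi.sub_apply, Pi.add_apply, Pi.smul_apply, smul_eq_mul,
      h01, h02, h10, h12, h20, h21]
    norm_num
    field_simp
    ring
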